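/- arXiv:2102.09479 — 6 statements merged into one kernel-verified Lean document; each statement's English description precedes it below -/
import Mathlib

section
/- Exactness of the functional Lagrangian dual at the optimal multipliers (Theorem 1, second part): Let X_0, ..., X_K be nonempty measurable spaces, pi_k Markov kernels from X_k to X_{k+1} for k = 0, ..., K-1, P_0 a set of probability measures on X_0, and suppose psi(q) = ∫ c dq for a bounded measurable function c : X_K -> R. Define p_{k+1} as the pushforward of p_k through pi_k, and OPT = sup_{p_0 in P_0} ∫ c d(p_K). Define lambda*_K = c and, for k = K-1 down to 1, lambda*_k(x) = ∫_{X_{k+1}} lambda*_{k+1}(y) d(pi_k(x))(y). Then g(lambda*) = OPT, where g(lambda) = sup_{p_0 in P_0} ∫_{X_0} (∫_{X_1} lambda_1(y) d(pi_0(x))(y)) dp_0(x) + sum_{k=1}^{K-1} sup_{x in X_k} (∫_{X_{k+1}} lambda_{k+1}(y) d(pi_k(x))(y) - lambda_k(x)) + sup_{q probability measure on X_K} (∫ c dq - ∫ lambda_K dq). -/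
/-!
With the optimal multipliers every slack term `∫ λ_{k+1} dπ_k(x) - λ_k(x)` vanishes pointwise
and the last term vanishes because `λ_K = c`. Since `λ_k` integrates `λ_{k+1}` against `π_k`,
the integrals `∫ λ_k dp_k` are all equal (the tower property of the pushforwards), so the first
term is `sup_{p_0} ∫ λ_K dp_K = OPT`. Boundedness of `c` propagates down the recursion and makes
every integral in sight honest.
-/

open MeasureTheory ProbabilityTheory

noncomputable def seqMeasure {X : ℕ → Type*} [∀ k, MeasurableSpace (X k)]
    (π : ∀ k, Kernel (X k) (X (k + 1))) (p0 : Measure (X 0)) :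
    ∀ k, Measure (X k)
  | 0 => p0
  | k + 1 => (seqMeasure π p0 k).bind (fun x => π k x)

lemma MeasureTheory.Measure.integral_comp_kernel {α β E : Type*} [MeasurableSpace α]
    [MeasurableSpace β] [NormedAddCommGroup E] [NormedSpace ℝ E] {μ : Measure α} [SFinite μ]
    {κ : Kernel α β} [IsSFiniteKernel κ] {f : β → E} (hf : Integrable f (κ ∘ₘ μ)) :
    ∫ y, f y ∂(κ ∘ₘ μ) = ∫ x, ∫ y, f y ∂κ x ∂μ := by
  rw [Measure.comp_eq_comp_const_apply] at hf ⊢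
  rw [Kernel.integral_comp hf, Kernel.const_apply]

lemma abs_integral_le_of_forall_abs_le {α : Type*} [MeasurableSpace α] {μ : Measure α}
    [IsProbabilityMeasure μ] {f : α → ℝ} {M : ℝ} (h : ∀ x, |f x| ≤ M) :
    |∫ x, f x ∂μ| ≤ M := by
  simpa using norm_integral_le_of_norm_le_const (μ := μ) (f := f) (.of_forall h)

lemma iSup_isProbabilityMeasure_const {X L : Type*} [MeasurableSpace X] [Nonempty X]
    [CompleteLattice L] (a : L) : ⨆ (q : Measure X) (_ : IsProbabilityMeasure q), a = a :=
  le_antisymm (iSup₂_le fun _ _ => le_rfl)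
    (le_iSup₂_of_le (Measure.dirac (Classical.arbitrary X)) inferInstance le_rfl)

section seqMeasure

variable {X : ℕ → Type*} [∀ k, MeasurableSpace (X k)] {π : ∀ k, Kernel (X k) (X (k + 1))}
  {p0 : Measure (X 0)}

lemma seqMeasure_succ (k : ℕ) : seqMeasure π p0 (k + 1) = π k ∘ₘ seqMeasure π p0 k := rfl

instance isProbabilityMeasure_seqMeasure [IsProbabilityMeasure p0]
    [∀ k, IsMarkovKernel (π k)] (k : ℕ) : IsProbabilityMeasure (seqMeasure π p0 k) := by
  induction k with
  | zero => assumption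
  | succ k ih => rw [seqMeasure_succ]; infer_instance

def IsBackwardRecursion (π : ∀ k, Kernel (X k) (X (k + 1))) (f : ∀ k, X k → ℝ)
    (m n : ℕ) : Prop :=
  ∀ k, m ≤ k → k < n → f k = fun x => ∫ y, f (k + 1) y ∂π k x

variable [∀ k, IsMarkovKernel (π k)] {f : ∀ k, X k → ℝ} {m n : ℕ} {M : ℝ}

lemma IsBackwardRecursion.measurable_and_abs_le (hrec : IsBackwardRecursion π f m n)
    (hmeas : Measurable (f n)) (hM : ∀ x, |f n x| ≤ M) {k : ℕ} (hmk : m ≤ k)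
    (hkn : k ≤ n) :
    Measurable (f k) ∧ ∀ x, |f k x| ≤ M := by
  refine Nat.decreasingInduction' (fun j hjn hkj ih => ?_) hkn ⟨hmeas, hM⟩
  rw [hrec j (hmk.trans hkj) hjn]
  exact ⟨ih.1.stronglyMeasurable.integral_kernel.measurable,
    fun x => abs_integral_le_of_forall_abs_le ih.2⟩

lemma IsBackwardRecursion.integral_seqMeasure_eq (hrec : IsBackwardRecursion π f m n)
    (hmeas : Measurable (f n)) (hM : ∀ x, |f n x| ≤ M) [IsProbabilityMeasure p0]
    (hmn : m ≤ n) :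
    ∫ y, f m y ∂(seqMeasure π p0 m) = ∫ y, f n y ∂(seqMeasure π p0 n) := by
  refine Nat.decreasingInduction' (fun k hkn hmk ih => ?_) hmn rfl
  obtain ⟨hf, hfM⟩ := hrec.measurable_and_abs_le hmeas hM (hmk.trans k.le_succ) hkn
  rw [← ih, seqMeasure_succ, Measure.integral_comp_kernel
    (.of_bound hf.aestronglyMeasurable M (.of_forall hfM)), hrec k hmk hkn]

end seqMeasure

/-- Exactness of the functional Lagrangian dual at the optimal multipliers
(Theorem 1, second part): if `ψ q = ∫ c dq` and `lam` satisfies the backward recursion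
`lam K = c`, `lam k x = ∫ lam (k+1) y ∂(π k x)`, then the dual `g lam` equals `OPT`. -/
theorem functional_lagrangian_dual_exact
    {X : ℕ → Type*} [∀ k, MeasurableSpace (X k)] [∀ k, Nonempty (X k)]
    (K : ℕ) (hK : 1 ≤ K)
    (π : ∀ k, Kernel (X k) (X (k + 1))) [∀ k, IsMarkovKernel (π k)]
    (P0 : Set (Measure (X 0))) (hP0 : ∀ p ∈ P0, IsProbabilityMeasure p)
    (c : X K → ℝ) (hcmeas : Measurable c) (hcbdd : ∃ M : ℝ, ∀ x, |c x| ≤ M)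
    (lam : ∀ k, X k → ℝ)
    (hlamK : lam K = c)
    (hlam : ∀ k, 1 ≤ k → k < K → lam k = fun x => ∫ y, lam (k + 1) y ∂(π k x)) :
    ((⨆ p0 ∈ P0, ((∫ x, ∫ y, lam 1 y ∂(π 0 x) ∂p0 : ℝ) : EReal))
        + ∑ k ∈ Finset.Icc 1 (K - 1),
            ⨆ x : X k, (((∫ y, lam (k + 1) y ∂(π k x)) - lam k x : ℝ) : EReal)
        + ⨆ (q : Measure (X K)) (_ : IsProbabilityMeasure q),
            (((∫ y, c y ∂q) - ∫ y, lam K y ∂q : ℝ) : EReal)) =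
      ⨆ p0 ∈ P0, ((∫ y, c y ∂(seqMeasure π p0 K) : ℝ) : EReal) := by
  obtain ⟨M, hM⟩ := hcbdd
  subst hlamK
  have hrec : IsBackwardRecursion π lam 1 K := hlam
  have hfirst : ∀ p0 ∈ P0,
      ∫ x, ∫ y, lam 1 y ∂(π 0 x) ∂p0 = ∫ y, lam K y ∂(seqMeasure π p0 K) := by
    intro p0 hp0
    have := hP0 p0 hp0
    obtain ⟨hmeas₁, hM₁⟩ := hrec.measurable_and_abs_le hcmeas hM le_rfl hK
    rw [← hrec.integral_seqMeasure_eq hcmeas hM hK]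
    exact (Measure.integral_comp_kernel
      (.of_bound hmeas₁.aestronglyMeasurable M (.of_forall hM₁))).symm
  -- The trailing supremum over `q` lies inside the `⨆ x` of each summand.
  have hslack : ∀ k ∈ Finset.Icc 1 (K - 1),
      ⨆ x : X k, (((∫ y, lam (k + 1) y ∂(π k x)) - lam k x : ℝ) : EReal)
        + ⨆ (q : Measure (X K)) (_ : IsProbabilityMeasure q),
            (((∫ y, lam K y ∂q) - ∫ y, lam K y ∂q : ℝ) : EReal) = 0 := by
    intro k hk
    obtain ⟨hk₁, hkK⟩ := Finset.mem_Icc.mp hk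
    simp only [hlam k hk₁ (by omega), sub_self, EReal.coe_zero, iSup_isProbabilityMeasure_const,
      add_zero, iSup_const]
  rw [Finset.sum_eq_zero hslack, add_zero]
  exact biSup_congr fun p0 hp0 => by rw [hfirst p0 hp0]
end

section
/- First-layer bound with linear-exponential multipliers via a convex program (Proposition 1, second inequality, proved in the appendix for elementwise ReLU activation): Let l2 <= u2 in R^n (componentwise), w2 an m-by-n real matrix, b2 in R^m, beta in R^m, alpha, gamma in R^n, kappa in R, and let ReLU(z) = max(z, 0) applied componentwise. Then for every eta in R^n and every zeta > 0: sup over x with l2 <= x <= u2 of [beta^T (w2 ReLU(x) + b2) - alpha^T x - exp(gamma^T x + kappa)] <= zeta (log(zeta) - 1 - kappa) + beta^T b2 + sum_{i=1}^n max((eta + w2^T beta)_i ReLU(l2_i), (eta + w2^T beta)_i ReLU(u2_i)) + sum_{i=1}^n sup over z in [l2_i, u2_i] of (-(alpha_i + zeta gamma_i) z - eta_i ReLU(z)). -/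
/-!
For fixed `x`, bound `-exp(γᵀx + κ)` above by `ζ (log ζ - 1) - ζ (γᵀx + κ)` (Fenchel–Young),
which is linear in `x`. Writing `r = ReLU x`, the objective becomes `βᵀb2 + Σᵢ (wᵀβ)ᵢ rᵢ` minus
linear terms; adding and subtracting `ηᵢ rᵢ` splits each coordinate into `(ηᵢ + (wᵀβ)ᵢ) rᵢ`,
which is at most its value at an endpoint since `rᵢ ∈ [ReLU l2ᵢ, ReLU u2ᵢ]`, and
`-(αᵢ + ζγᵢ) xᵢ - ηᵢ rᵢ`, which is at most its supremum over `[l2ᵢ, u2ᵢ]`.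
-/

open Matrix

@[simp, norm_cast]
theorem EReal.coe_finset_sum {ι : Type*} (s : Finset ι) (f : ι → ℝ) :
    ((∑ i ∈ s, f i : ℝ) : EReal) = ∑ i ∈ s, (f i : EReal) :=
  map_sum (⟨⟨Real.toEReal, EReal.coe_zero⟩, EReal.coe_add⟩ : ℝ →+ EReal) f s

theorem Real.mul_sub_exp_le {ζ : ℝ} (hζ : 0 < ζ) (t : ℝ) :
    ζ * t - exp t ≤ ζ * (log ζ - 1) := by
  have h := add_one_le_exp (t - log ζ)
  rw [exp_sub, exp_log hζ, le_div_iff₀ hζ] at h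
  linarith

theorem mul_le_max_mul_of_mem_Icc {R : Type*} [Ring R] [LinearOrder R] [IsStrictOrderedRing R]
    {a b y : R} (c : R) (hy : y ∈ Set.Icc a b) : c * y ≤ max (c * a) (c * b) := by
  rcases le_total 0 c with hc | hc
  · exact le_max_of_le_right (mul_le_mul_of_nonneg_left hy.2 hc)
  · exact le_max_of_le_left (mul_le_mul_of_nonpos_left hy.1 hc)

theorem mul_relu_le_max_of_mem_Icc {l u x : ℝ} (c : ℝ) (hx : x ∈ Set.Icc l u) :
    c * max x 0 ≤ max (c * max l 0) (c * max u 0) :=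
  mul_le_max_mul_of_mem_Icc c ⟨max_le_max_right 0 hx.1, max_le_max_right 0 hx.2⟩

theorem linexp_relu_objective_le {m n : Type*} [Fintype m] [Fintype n]
    {l u x : n → ℝ} (hx : x ∈ Set.Icc l u)
    (w : Matrix m n ℝ) (b β : m → ℝ) (α γ η : n → ℝ) (κ : ℝ) {ζ : ℝ} (hζ : 0 < ζ) :
    β ⬝ᵥ (w *ᵥ (fun i => max (x i) 0) + b) - α ⬝ᵥ x - Real.exp (γ ⬝ᵥ x + κ) ≤
      ζ * (Real.log ζ - 1 - κ) + β ⬝ᵥ b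
        + ∑ i, max ((η i + (β ᵥ* w) i) * max (l i) 0) ((η i + (β ᵥ* w) i) * max (u i) 0)
        + ∑ i, (-(α i + ζ * γ i) * x i - η i * max (x i) 0) := by
  set r : n → ℝ := fun i => max (x i) 0
  have hexp := Real.mul_sub_exp_le hζ (γ ⬝ᵥ x + κ)
  have hrelu : (η + β ᵥ* w) ⬝ᵥ r ≤
      ∑ i, max ((η i + (β ᵥ* w) i) * max (l i) 0) ((η i + (β ᵥ* w) i) * max (u i) 0) :=
    Finset.sum_le_sum fun i _ => mul_relu_le_max_of_mem_Icc _ ⟨hx.1 i, hx.2 i⟩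
  have hlin : ∑ i, (-(α i + ζ * γ i) * x i - η i * r i) =
      -(α ⬝ᵥ x) - ζ * (γ ⬝ᵥ x) - η ⬝ᵥ r := by
    simp only [dotProduct, Finset.mul_sum, ← Finset.sum_neg_distrib, ← Finset.sum_sub_distrib]
    exact Finset.sum_congr rfl fun i _ => by ring
  rw [hlin, dotProduct_add, dotProduct_mulVec]
  rw [add_dotProduct] at hrelu
  linarith

theorem first_layer_linexp_relu_bound_general
    (n m : ℕ) (l2 u2 : Fin n → ℝ)
    (w2 : Matrix (Fin m) (Fin n) ℝ) (b2 β : Fin m → ℝ)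
    (α γ : Fin n → ℝ) (κ : ℝ)
    (η : Fin n → ℝ) (ζ : ℝ) (hζ : 0 < ζ) :
    (⨆ x ∈ Set.Icc l2 u2,
        ((β ⬝ᵥ (w2 *ᵥ (fun i => max (x i) 0) + b2) - α ⬝ᵥ x
            - Real.exp (γ ⬝ᵥ x + κ) : ℝ) : EReal)) ≤
      ((ζ * (Real.log ζ - 1 - κ) + β ⬝ᵥ b2
          + ∑ i, max ((η i + (β ᵥ* w2) i) * max (l2 i) 0)
              ((η i + (β ᵥ* w2) i) * max (u2 i) 0) : ℝ) : EReal)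
        + ∑ i, ⨆ z ∈ Set.Icc (l2 i) (u2 i),
            ((-(α i + ζ * γ i) * z - η i * max z 0 : ℝ) : EReal) := by
  refine iSup₂_le fun x hx => ?_
  calc _ ≤ _ := EReal.coe_le_coe_iff.mpr
          (linexp_relu_objective_le hx w2 b2 β α γ η κ hζ)
    _ = _ := by rw [EReal.coe_add, EReal.coe_finset_sum]
    _ ≤ _ := by
      gcongr with i
      exact le_iSup₂ (f := fun z (_ : z ∈ Set.Icc (l2 i) (u2 i)) =>
        ((-(α i + ζ * γ i) * z - η i * max z 0 : ℝ) : EReal)) (x i) ⟨hx.1 i, hx.2 i⟩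

/-- First-layer bound with linear-exponential multipliers via a convex program
(Proposition 1, second inequality, for elementwise ReLU activation): for every
dual variables `η ∈ ℝ^n` and `ζ > 0`,
`sup_{l2 ≤ x ≤ u2} [βᵀ(w2 ReLU(x) + b2) - αᵀx - exp(γᵀx + κ)]`
is bounded by the stated expression. -/
theorem first_layer_linexp_relu_bound
    (n m : ℕ) (l2 u2 : Fin n → ℝ) (hlu : l2 ≤ u2)
    (w2 : Matrix (Fin m) (Fin n) ℝ) (b2 β : Fin m → ℝ)
    (α γ : Fin n → ℝ) (κ : ℝ)
    (η : Fin n → ℝ) (ζ : ℝ) (hζ : 0 < ζ) :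
    (⨆ x ∈ Set.Icc l2 u2,
        ((β ⬝ᵥ (w2 *ᵥ (fun i => max (x i) 0) + b2) - α ⬝ᵥ x
            - Real.exp (γ ⬝ᵥ x + κ) : ℝ) : EReal)) ≤
      ((ζ * (Real.log ζ - 1 - κ) + β ⬝ᵥ b2
          + ∑ i, max ((η i + (β ᵥ* w2) i) * max (l2 i) 0)
              ((η i + (β ᵥ* w2) i) * max (u2 i) 0) : ℝ) : EReal)
        + ∑ i, ⨆ z ∈ Set.Icc (l2 i) (u2 i),
            ((-(α i + ζ * γ i) * z - η i * max z 0 : ℝ) : EReal) :=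
  first_layer_linexp_relu_bound_general n m l2 u2 w2 b2 β α γ κ η ζ hζ
end

section
/- Upper bound for the output-layer softmax problem with affine multipliers (Proposition 2): Let X_K = {x in R^n : l <= x <= u} be a nonempty box, let i* in {1, ..., n}, and define c(x) = exp(x_{i*}) / sum_{j=1}^n exp(x_j). Let lambda_K : R^n -> R be an affine function. Let t_1 <= t_2 <= ... <= t_N be real numbers with t_1 = min_{x in X_K} c(x) and t_N = max_{x in X_K} c(x). For i = 1, ..., N-1 define M_i = sup of -lambda_K(x) over all x in X_K satisfying t_i * sum_{j=1}^n exp(x_j - x_{i*}) <= 1. Then max_{x in X_K} (c(x) - lambda_K(x)) <= max_{1 <= i <= N-1} (M_i + t_{i+1}). -/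
/-!
Fix `x` in the box. Since `t 0 ≤ c x ≤ t (N - 1)`, some consecutive pair of thresholds
brackets it: `t i ≤ c x ≤ t (i + 1)`. As `c x * ∑ j exp (x j - x i⋆) = 1`, the lower bound
makes `x` feasible for the `i`-th program, so `-lamK x ≤ M i`, and the upper bound gives
`c x - lamK x ≤ M i + t (i + 1)`.
-/

open Finset Real

theorem exists_le_le_succ_of_le_of_le {α : Type*} [LinearOrder α] (t : ℕ → α) {y : α} :
    ∀ m : ℕ, t 0 ≤ y → y ≤ t (m + 1) → ∃ i ≤ m, t i ≤ y ∧ y ≤ t (i + 1)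
  | 0, h0, h1 => ⟨0, le_rfl, h0, h1⟩
  | m + 1, h0, h2 => by
    by_cases h1 : y ≤ t (m + 1)
    · obtain ⟨i, him, hi⟩ := exists_le_le_succ_of_le_of_le t m h0 h1
      exact ⟨i, him.trans m.le_succ, hi⟩
    · exact ⟨m + 1, le_rfl, (not_le.mp h1).le, h2⟩

section Softmax

variable {ι : Type*} [Fintype ι]

theorem sum_exp_pos (x : ι → ℝ) (i : ι) : 0 < ∑ j, exp (x j) :=
  sum_pos (fun _ _ => exp_pos _) ⟨i, mem_univ i⟩

theorem exp_div_sum_exp_pos (x : ι → ℝ) (i : ι) : 0 < exp (x i) / ∑ j, exp (x j) :=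
  div_pos (exp_pos _) (sum_exp_pos x i)

theorem exp_div_sum_exp_le_one (x : ι → ℝ) (i : ι) : exp (x i) / ∑ j, exp (x j) ≤ 1 :=
  div_le_one_of_le₀ (single_le_sum (fun j _ => (exp_pos (x j)).le) (mem_univ i))
    (sum_exp_pos x i).le

theorem exp_div_sum_exp_mul_sum_exp_sub (x : ι → ℝ) (i : ι) :
    exp (x i) / (∑ j, exp (x j)) * ∑ j, exp (x j - x i) = 1 := by
  simp_rw [exp_sub, ← sum_div]
  field_simp [(sum_exp_pos x i).ne']

theorem mul_sum_exp_sub_le_one {x : ι → ℝ} {i : ι} {s : ℝ}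
    (hs : s ≤ exp (x i) / ∑ j, exp (x j)) : s * ∑ j, exp (x j - x i) ≤ 1 :=
  exp_div_sum_exp_mul_sum_exp_sub x i ▸
    mul_le_mul_of_nonneg_right hs (sum_nonneg fun _ _ => (exp_pos _).le)

end Softmax

theorem output_layer_softmax_affine_bound_general
    (n : ℕ) (l u : Fin n → ℝ) (istar : Fin n)
    (lamK : (Fin n → ℝ) → ℝ)
    (N : ℕ) (hN : 2 ≤ N) (t : ℕ → ℝ)
    (ht0 : t 0 = sInf ((fun x => Real.exp (x istar) / ∑ j, Real.exp (x j)) ''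
        Set.Icc l u))
    (htN : t (N - 1) = sSup ((fun x => Real.exp (x istar) / ∑ j, Real.exp (x j)) ''
        Set.Icc l u)) :
    (⨆ x ∈ Set.Icc l u,
        ((Real.exp (x istar) / (∑ j, Real.exp (x j)) - lamK x : ℝ) : EReal)) ≤
      ⨆ i ∈ Finset.range (N - 1),
        ((⨆ x ∈ {x : Fin n → ℝ | x ∈ Set.Icc l u ∧
              t i * ∑ j, Real.exp (x j - x istar) ≤ 1},
            ((-lamK x : ℝ) : EReal))
          + ((t (i + 1) : ℝ) : EReal)) := by
  set c : (Fin n → ℝ) → ℝ := fun x => exp (x istar) / ∑ j, exp (x j)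
  refine iSup₂_le fun x hx => ?_
  have hcx : c x ∈ c '' Set.Icc l u := ⟨x, hx, rfl⟩
  have h0 : t 0 ≤ c x :=
    ht0 ▸ csInf_le ⟨0, Set.forall_mem_image.2 fun y _ => (exp_div_sum_exp_pos y istar).le⟩ hcx
  have hN1 : c x ≤ t (N - 2 + 1) := by
    rw [show N - 2 + 1 = N - 1 by omega, htN]
    exact le_csSup ⟨1, Set.forall_mem_image.2 fun y _ => exp_div_sum_exp_le_one y istar⟩ hcx
  obtain ⟨i, hiN, hti, hti1⟩ := exists_le_le_succ_of_le_of_le t (N - 2) h0 hN1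
  have hfeas : ((-lamK x : ℝ) : EReal) ≤ ⨆ y ∈ {y : Fin n → ℝ | y ∈ Set.Icc l u ∧
      t i * ∑ j, exp (y j - y istar) ≤ 1}, ((-lamK y : ℝ) : EReal) :=
    le_iSup₂ (f := fun y _ => ((-lamK y : ℝ) : EReal)) x ⟨hx, mul_sum_exp_sub_le_one hti⟩
  calc ((c x - lamK x : ℝ) : EReal) = ((-lamK x : ℝ) : EReal) + ((c x : ℝ) : EReal) := by
        rw [← EReal.coe_add, neg_add_eq_sub]
    _ ≤ _ := add_le_add hfeas (EReal.coe_le_coe_iff.2 hti1)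
    _ ≤ _ := le_iSup₂ (f := fun i' (_ : i' ∈ range (N - 1)) =>
          (⨆ y ∈ {y : Fin n → ℝ | y ∈ Set.Icc l u ∧ t i' * ∑ j, exp (y j - y istar) ≤ 1},
            ((-lamK y : ℝ) : EReal)) + ((t (i' + 1) : ℝ) : EReal))
          i (mem_range.2 (by omega))

/-- Upper bound for the output-layer softmax problem with affine multipliers
(Proposition 2): with `c x = exp (x i⋆) / ∑ j exp (x j)` (the softmax probability of
class `i⋆`), an affine multiplier `lamK`, and thresholds `t 0 ≤ … ≤ t (N-1)` going
from the minimum to the maximum of `c` over the box, the maximum of `c - lamK` over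
the box is bounded by `max_i (M i + t (i+1))` where `M i` is the value of the convex
program maximizing `-lamK x` subject to `t i * ∑ j exp (x j - x i⋆) ≤ 1`. -/
theorem output_layer_softmax_affine_bound
    (n : ℕ) (l u : Fin n → ℝ) (hlu : l ≤ u) (istar : Fin n)
    (lamK : (Fin n → ℝ) → ℝ)
    (haff : ∃ (a : Fin n → ℝ) (a0 : ℝ), ∀ x, lamK x = (∑ j, a j * x j) + a0)
    (N : ℕ) (hN : 2 ≤ N) (t : ℕ → ℝ)
    (hmono : ∀ i j, i ≤ j → j < N → t i ≤ t j)
    (ht0 : t 0 = sInf ((fun x => Real.exp (x istar) / ∑ j, Real.exp (x j)) ''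
        Set.Icc l u))
    (htN : t (N - 1) = sSup ((fun x => Real.exp (x istar) / ∑ j, Real.exp (x j)) ''
        Set.Icc l u)) :
    (⨆ x ∈ Set.Icc l u,
        ((Real.exp (x istar) / (∑ j, Real.exp (x j)) - lamK x : ℝ) : EReal)) ≤
      ⨆ i ∈ Finset.range (N - 1),
        ((⨆ x ∈ {x : Fin n → ℝ | x ∈ Set.Icc l u ∧
              t i * ∑ j, Real.exp (x j - x istar) ≤ 1},
            ((-lamK x : ℝ) : EReal))
          + ((t (i + 1) : ℝ) : EReal)) :=
  output_layer_softmax_affine_bound_general n l u istar lamK N hN t ht0 htN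
end

section
/- Nonexistence of stationary points of the softmax-plus-linear objective (part of Proposition in Appendix, thm:softmax_exact_a): Fix C >= 0, an index i in {1, ..., n}, and lambda in R^n, and define f : R^n -> R by f(x) = exp(x_i) / (sum_{j=1}^n exp(x_j) + C) + sum_{j=1}^n lambda_j x_j. If lambda_i is not in the interval [-1/4, 0], or if lambda_j <= 0 for some j != i, then f has no stationary points, i.e. there is no x in R^n with gradient of f at x equal to zero. -/
/-!
At a stationary point every partial derivative vanishes. Writing `p = softmax` (with the extra
mass `C` in the denominator), `∂ⱼ pᵢ = pᵢ (δᵢⱼ - pⱼ)`, so stationarity forces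
`λⱼ = pᵢ pⱼ > 0` for `j ≠ i` and `λᵢ = pᵢ (pᵢ - 1)`, which lies in `[-1/4, 0]`
because `0 < pᵢ ≤ 1` when `C ≥ 0`.
-/

open Real Finset ContinuousLinearMap

theorem HasFDerivAt.div {𝕜 E : Type*} [NontriviallyNormedField 𝕜] [NormedAddCommGroup E]
    [NormedSpace 𝕜 E] {c d : E → 𝕜} {c' d' : E →L[𝕜] 𝕜} {x : E}
    (hc : HasFDerivAt c c' x) (hd : HasFDerivAt d d' x) (hx : d x ≠ 0) :
    HasFDerivAt (fun y => c y / d y) ((d x ^ 2)⁻¹ • (d x • c' - c x • d')) x := by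
  simp only [div_eq_mul_inv]
  refine (hc.mul ((hasFDerivAt_inv hx).comp x hd)).congr_fderiv ?_
  ext v
  simp only [Function.comp_apply, add_apply, smul_apply, comp_apply, toSpanSingleton_apply,
    smul_eq_mul, mul_neg, sub_apply]
  field_simp
  ring

theorem mul_sub_one_mem_Icc {p : ℝ} (h0 : 0 ≤ p) (h1 : p ≤ 1) :
    p * (p - 1) ∈ Set.Icc (-(1 / 4)) 0 :=
  ⟨by nlinarith [sq_nonneg (2 * p - 1)], mul_nonpos_of_nonneg_of_nonpos h0 (by linarith)⟩

variable {ι : Type*} [Fintype ι]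

noncomputable def slackSoftmax (C : ℝ) (x : ι → ℝ) (i : ι) : ℝ :=
  exp (x i) / (∑ j, exp (x j) + C)

variable {C : ℝ} {x : ι → ℝ} {i : ι}

theorem slackSoftmax_pos (hx : 0 < ∑ j, exp (x j) + C) : 0 < slackSoftmax C x i :=
  div_pos (exp_pos _) hx

theorem slackSoftmax_le_one (hC : 0 ≤ C) : slackSoftmax C x i ≤ 1 := by
  have hi : exp (x i) ≤ ∑ j, exp (x j) :=
    single_le_sum (fun j _ => (exp_pos (x j)).le) (mem_univ i)
  exact div_le_one_of_le₀ (by linarith) (by linarith [exp_pos (x i)])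

theorem hasFDerivAt_slackSoftmax (hx : ∑ j, exp (x j) + C ≠ 0) :
    HasFDerivAt (fun y => slackSoftmax C y i)
      (slackSoftmax C x i • ((proj i : (ι → ℝ) →L[ℝ] ℝ) - ∑ j, slackSoftmax C x j • proj j)) x := by
  have hnum := (hasFDerivAt_apply i x).exp
  have hden := (HasFDerivAt.fun_sum (u := univ) fun j _ => (hasFDerivAt_apply j x).exp).add_const C
  refine (hnum.div hden hx).congr_fderiv ?_
  ext v
  simp only [smul_apply, sub_apply, proj_apply, smul_eq_mul, _root_.sum_apply, slackSoftmax]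
  field_simp
  rw [mul_sub, ← Finset.sum_div, mul_div_cancel₀ _ hx]

theorem hasFDerivAt_sum_mul_apply (lam : ι → ℝ) :
    HasFDerivAt (fun y : ι → ℝ => ∑ j, lam j * y j) (∑ j, lam j • proj j : (ι → ℝ) →L[ℝ] ℝ) x :=
  HasFDerivAt.fun_sum fun j _ => (hasFDerivAt_apply j x).const_mul (lam j)

theorem eq_of_fderiv_slackSoftmax_add_sum_mul_eq_zero [DecidableEq ι] {lam : ι → ℝ}
    (hx : ∑ j, exp (x j) + C ≠ 0)
    (h : fderiv ℝ (fun y => slackSoftmax C y i + ∑ j, lam j * y j) x = 0) (j : ι) :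
    lam j = slackSoftmax C x i * (slackSoftmax C x j - (Pi.single j 1 : ι → ℝ) i) := by
  have hf := (hasFDerivAt_slackSoftmax (i := i) hx).add (hasFDerivAt_sum_mul_apply lam)
  have hpartial := congrArg (· (Pi.single j 1)) (hf.fderiv.symm.trans h)
  simp only [add_apply, smul_apply, sub_apply, proj_apply, Pi.single_apply, _root_.sum_apply,
    smul_eq_mul, mul_ite, mul_one, mul_zero, sum_ite_eq', mem_univ, ↓reduceIte, zero_apply]
    at hpartial
  rw [Pi.single_apply]
  linarith

/-- Nonexistence of stationary points of the softmax-plus-linear objective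
(part of Proposition thm:softmax_exact_a): if `lam i ∉ [-1/4, 0]`, or `lam j ≤ 0`
for some `j ≠ i`, then `f x = exp (x i) / (∑ j exp (x j) + C) + ∑ j lam j * x j`
has no stationary point. -/
theorem softmax_linear_no_stationary_points
    (n : ℕ) (C : ℝ) (hC : 0 ≤ C) (i : Fin n) (lam : Fin n → ℝ)
    (h : lam i ∉ Set.Icc (-(1 / 4) : ℝ) 0 ∨ ∃ j, j ≠ i ∧ lam j ≤ 0) :
    ∀ x : Fin n → ℝ,
      fderiv ℝ (fun x : Fin n → ℝ =>
        Real.exp (x i) / ((∑ j, Real.exp (x j)) + C) + ∑ j, lam j * x j) x ≠ 0 := by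
  intro x hx
  have hT : 0 < ∑ j, exp (x j) + C :=
    add_pos_of_pos_of_nonneg (sum_pos (fun j _ => exp_pos _) ⟨i, mem_univ i⟩) hC
  have hlam := eq_of_fderiv_slackSoftmax_add_sum_mul_eq_zero hT.ne' hx
  rcases h with hi | ⟨j, hji, hj⟩
  · refine hi ?_
    rw [hlam i, Pi.single_eq_same]
    exact mul_sub_one_mem_Icc (slackSoftmax_pos hT).le (slackSoftmax_le_one hC)
  · rw [hlam j, Pi.single_eq_of_ne hji.symm, sub_zero] at hj
    exact hj.not_gt (mul_pos (slackSoftmax_pos hT) (slackSoftmax_pos hT))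
end

section
/- Characterization of stationary points of the softmax-plus-linear objective for C > 0 (part of Proposition in Appendix, thm:softmax_exact_a): Fix C > 0, an index i in {1, ..., n}, and lambda in R^n with lambda_i in [-1/4, 0] and lambda_j >= 0 for all j != i. Define f(x) = exp(x_i) / (sum_{j=1}^n exp(x_j) + C) + sum_{j=1}^n lambda_j x_j. Define p in R^n by p_i = (1 + sqrt(1 + 4 lambda_i))/2 and p_j = 2 lambda_j / (1 + sqrt(1 + 4 lambda_i)) for j != i, and p' in R^n by p'_i = (1 - sqrt(1 + 4 lambda_i))/2 and p'_j = 2 lambda_j / (1 - sqrt(1 + 4 lambda_i)) for j != i (when the denominators are nonzero). Then f has at most two stationary points, and they are: if all entries of p are positive and sum_j p_j < 1, then x with x_j = log(p_j) + log(C / (1 - sum_k p_k)) is a stationary point of f; if all entries of p' are positive and sum_j p'_j < 1, then x' with x'_j = log(p'_j) + log(C / (1 - sum_k p'_k)) is a stationary point of f; and every stationary point of f is one of these two points. -/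
/-!
With `ζ = exp x / (∑ exp x + C)`, the partial derivatives of the objective are
`ζ_i (δ_ij - ζ_j) + λ_j`, so a stationary point is the same as a weight vector `ζ` solving
`ζ_i² - ζ_i + λ_i = 0` and `ζ_j = λ_j / ζ_i`. Writing `ζ_i = (1 + r) / 2`, the quadratic says
`r² = 1 + 4 λ_i`, i.e. `r = ±√(1 + 4 λ_i)`, which gives exactly the two candidates `p` and `p'`.
Since `C > 0`, the map `x ↦ ζ` is a bijection from `ℝⁿ` onto the positive weight vectors with
sum `< 1`, inverted by `q ↦ log q + log (C / (1 - ∑ q))`.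
-/

open Real Finset

noncomputable def offsetSoftmax {ι : Type*} [Fintype ι] (C : ℝ) (x : ι → ℝ) (j : ι) : ℝ :=
  exp (x j) / (∑ k, exp (x k) + C)

noncomputable def offsetLogit {ι : Type*} [Fintype ι] (C : ℝ) (q : ι → ℝ) (j : ι) : ℝ :=
  log (q j) + log (C / (1 - ∑ k, q k))

noncomputable def softmaxLinearObjective {ι : Type*} [Fintype ι] (C : ℝ) (i : ι)
    (lam x : ι → ℝ) : ℝ :=
  offsetSoftmax C x i + ∑ j, lam j * x j

def IsSoftmaxCritical {ι : Type*} [DecidableEq ι] (i : ι) (lam q : ι → ℝ) : Prop :=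
  ∀ j, q i * ((if j = i then 1 else 0) - q j) + lam j = 0

noncomputable def criticalWeights {ι : Type*} [DecidableEq ι] (i : ι) (lam : ι → ℝ) (r : ℝ)
    (j : ι) : ℝ :=
  if j = i then (1 + r) / 2 else 2 * lam j / (1 + r)

theorem ContinuousLinearMap.eq_zero_iff_apply_single {ι R M : Type*} [Fintype ι]
    [DecidableEq ι] [Semiring R] [TopologicalSpace R] [AddCommMonoid M] [TopologicalSpace M]
    [Module R M] (L : (ι → R) →L[R] M) : L = 0 ↔ ∀ j, L (Pi.single j 1) = 0 := by
  refine ⟨fun h j => by simp [h], fun h => ContinuousLinearMap.ext fun x => ?_⟩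
  rw [pi_eq_sum_univ' x]
  simp [h]

section Softmax

variable {ι : Type*} [Fintype ι] {C : ℝ}

lemma sum_exp_add_pos (hC : 0 < C) (x : ι → ℝ) : 0 < ∑ k, exp (x k) + C := by
  positivity

lemma offsetSoftmax_pos (hC : 0 < C) (x : ι → ℝ) (j : ι) : 0 < offsetSoftmax C x j :=
  div_pos (exp_pos _) (sum_exp_add_pos hC x)

lemma one_sub_sum_offsetSoftmax (hC : 0 < C) (x : ι → ℝ) :
    1 - ∑ j, offsetSoftmax C x j = C / (∑ k, exp (x k) + C) := by
  have := (sum_exp_add_pos hC x).ne'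
  simp only [offsetSoftmax, ← Finset.sum_div]
  field_simp
  ring

lemma offsetLogit_offsetSoftmax (hC : 0 < C) (x : ι → ℝ) :
    offsetLogit C (offsetSoftmax C x) = x := by
  have hT := sum_exp_add_pos hC x
  funext j
  rw [offsetLogit, one_sub_sum_offsetSoftmax hC, div_div_cancel₀ hC.ne', offsetSoftmax,
    log_div (exp_pos _).ne' hT.ne', log_exp, sub_add_cancel]

lemma offsetSoftmax_offsetLogit {q : ι → ℝ} (hC : 0 < C) (hq : ∀ j, 0 < q j)
    (hsum : ∑ j, q j < 1) : offsetSoftmax C (offsetLogit C q) = q := by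
  have hM : 0 < C / (1 - ∑ k, q k) := div_pos hC (sub_pos.mpr hsum)
  have hexp : ∀ j, exp (offsetLogit C q j) = q j * (C / (1 - ∑ k, q k)) := fun j => by
    rw [offsetLogit, exp_add, exp_log (hq j), exp_log hM]
  have hT : ∑ k, exp (offsetLogit C q k) + C = C / (1 - ∑ k, q k) := by
    simp only [hexp, ← Finset.sum_mul]
    field_simp [(sub_pos.mpr hsum).ne']
    ring
  funext j
  rw [offsetSoftmax, hT, hexp, mul_div_cancel_right₀ _ hM.ne']

variable [DecidableEq ι]

lemma fderiv_softmaxLinearObjective_single (hC : 0 < C) (i : ι) (lam x : ι → ℝ) (j : ι) :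
    fderiv ℝ (softmaxLinearObjective C i lam) x (Pi.single j 1) =
      offsetSoftmax C x i * ((if j = i then 1 else 0) - offsetSoftmax C x j) + lam j := by
  have hT := (sum_exp_add_pos hC x).ne'
  let proj (k : ι) := ContinuousLinearMap.proj (R := ℝ) (φ := fun _ : ι => ℝ) k
  have hexp (k : ι) : HasFDerivAt (fun y : ι → ℝ => exp (y k)) (exp (x k) • proj k) x :=
    (hasFDerivAt_apply k x).exp
  have hsum : HasFDerivAt (fun y : ι → ℝ => ∑ k, exp (y k)) (∑ k, exp (x k) • proj k) x :=
    HasFDerivAt.fun_sum fun k _ => hexp k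
  have hinv : HasFDerivAt (fun y : ι → ℝ => (∑ k, exp (y k) + C)⁻¹)
      ((-((∑ k, exp (x k) + C) ^ 2)⁻¹) • ∑ k, exp (x k) • proj k) x :=
    (hasDerivAt_inv hT).comp_hasFDerivAt x (hsum.add_const C)
  have hlin : HasFDerivAt (fun y : ι → ℝ => ∑ k, lam k * y k) (∑ k, lam k • proj k) x :=
    HasFDerivAt.fun_sum fun k _ => (hasFDerivAt_apply k x).const_mul (lam k)
  have hobj : softmaxLinearObjective C i lam =
      fun y => exp (y i) * (∑ k, exp (y k) + C)⁻¹ + ∑ k, lam k * y k := by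
    funext y
    rw [softmaxLinearObjective, offsetSoftmax, div_eq_mul_inv]
  rw [hobj, (((hexp i).fun_mul hinv).fun_add hlin).fderiv]
  simp only [add_apply, smul_apply, _root_.sum_apply,
    ContinuousLinearMap.proj_apply, Pi.single_apply, smul_eq_mul,
    mul_ite, mul_one, mul_zero, sum_ite_eq', mem_univ, if_true, neg_mul, mul_neg, offsetSoftmax,
    add_left_inj, proj]
  obtain rfl | hji := eq_or_ne j i
  · simp only [if_true]
    field_simp
    ring
  · simp only [if_neg hji, if_neg hji.symm]
    field_simp
    ring

lemma fderiv_softmaxLinearObjective_eq_zero_iff (hC : 0 < C) (i : ι) (lam x : ι → ℝ) :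
    fderiv ℝ (softmaxLinearObjective C i lam) x = 0 ↔
      IsSoftmaxCritical i lam (offsetSoftmax C x) := by
  simp only [ContinuousLinearMap.eq_zero_iff_apply_single,
    fderiv_softmaxLinearObjective_single hC, IsSoftmaxCritical]

end Softmax

section Critical

variable {ι : Type*} [DecidableEq ι] {i : ι} {lam q : ι → ℝ} {r : ℝ}

lemma isSoftmaxCritical_criticalWeights (hr : r ^ 2 = 1 + 4 * lam i) (h1r : 1 + r ≠ 0) :
    IsSoftmaxCritical i lam (criticalWeights i lam r) := by
  intro j
  obtain rfl | hji := eq_or_ne j i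
  · simp only [criticalWeights, if_true]
    linear_combination -hr / 4
  · simp only [criticalWeights, if_true, if_neg hji]
    field_simp
    ring

lemma IsSoftmaxCritical.eq_criticalWeights (h : IsSoftmaxCritical i lam q) (hqi : q i ≠ 0) :
    (2 * q i - 1) ^ 2 = 1 + 4 * lam i ∧ q = criticalWeights i lam (2 * q i - 1) := by
  have hi := h i
  simp only [if_true] at hi
  refine ⟨by linear_combination -4 * hi, funext fun j => ?_⟩
  obtain rfl | hji := eq_or_ne j i
  · simp only [criticalWeights, if_true]
    ring
  · have hj := h j
    simp only [criticalWeights, if_neg hji] at hj ⊢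
    field_simp
    linear_combination -2 * hj

lemma IsSoftmaxCritical.eq_criticalWeights_sqrt_or_neg (h : IsSoftmaxCritical i lam q)
    (hqi : q i ≠ 0) :
    q = criticalWeights i lam √(1 + 4 * lam i) ∨ q = criticalWeights i lam (-√(1 + 4 * lam i)) := by
  obtain ⟨hr, hq⟩ := h.eq_criticalWeights hqi
  have hr' : (2 * q i - 1) ^ 2 = √(1 + 4 * lam i) ^ 2 := by
    rw [sq_sqrt (hr ▸ sq_nonneg _), hr]
  rcases sq_eq_sq_iff_eq_or_eq_neg.mp hr' with hs | hs
  · exact .inl (hs ▸ hq)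
  · exact .inr (hs ▸ hq)

end Critical

section Stationary

variable {ι : Type*} [Fintype ι] [DecidableEq ι] {C : ℝ} {i : ι} {lam : ι → ℝ} {r : ℝ}

lemma fderiv_softmaxLinearObjective_offsetLogit_criticalWeights (hC : 0 < C)
    (hr : r ^ 2 = 1 + 4 * lam i) (hpos : ∀ j, 0 < criticalWeights i lam r j)
    (hsum : ∑ j, criticalWeights i lam r j < 1) :
    fderiv ℝ (softmaxLinearObjective C i lam) (offsetLogit C (criticalWeights i lam r)) = 0 := by
  have h1r : 1 + r ≠ 0 := by
    have := hpos i
    simp only [criticalWeights, if_true] at this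
    linarith
  rw [fderiv_softmaxLinearObjective_eq_zero_iff hC, offsetSoftmax_offsetLogit hC hpos hsum]
  exact isSoftmaxCritical_criticalWeights hr h1r

lemma eq_offsetLogit_criticalWeights_of_fderiv_eq_zero (hC : 0 < C) {y : ι → ℝ}
    (hy : fderiv ℝ (softmaxLinearObjective C i lam) y = 0) :
    y = offsetLogit C (criticalWeights i lam √(1 + 4 * lam i)) ∨
      y = offsetLogit C (criticalWeights i lam (-√(1 + 4 * lam i))) := by
  rw [fderiv_softmaxLinearObjective_eq_zero_iff hC] at hy
  rw [← offsetLogit_offsetSoftmax hC y]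
  rcases hy.eq_criticalWeights_sqrt_or_neg (offsetSoftmax_pos hC y i).ne' with h | h <;>
    simp only [h, true_or, or_true]

end Stationary

theorem softmax_linear_stationary_points_pos_C_general
    (n : ℕ) (C : ℝ) (hC : 0 < C) (i : Fin n) (lam : Fin n → ℝ)
    (hli : lam i ∈ Set.Icc (-(1 / 4) : ℝ) 0) :
    let s : ℝ := Real.sqrt (1 + 4 * lam i)
    let f : (Fin n → ℝ) → ℝ := fun x =>
      Real.exp (x i) / ((∑ j, Real.exp (x j)) + C) + ∑ j, lam j * x j
    let p : Fin n → ℝ := fun j => if j = i then (1 + s) / 2 else 2 * lam j / (1 + s)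
    let p' : Fin n → ℝ := fun j => if j = i then (1 - s) / 2 else 2 * lam j / (1 - s)
    let xP : Fin n → ℝ := fun j => Real.log (p j) + Real.log (C / (1 - ∑ k, p k))
    let xP' : Fin n → ℝ := fun j => Real.log (p' j) + Real.log (C / (1 - ∑ k, p' k))
    ((∀ j, 0 < p j) → (∑ k, p k) < 1 → fderiv ℝ f xP = 0) ∧
    ((∀ j, 0 < p' j) → (∑ k, p' k) < 1 → fderiv ℝ f xP' = 0) ∧
    (∀ y : Fin n → ℝ, fderiv ℝ f y = 0 → y = xP ∨ y = xP') := by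
  intro s f p p' xP xP'
  have hs : s ^ 2 = 1 + 4 * lam i := sq_sqrt (by linarith [hli.1])
  have hp' : p' = criticalWeights i lam (-s) := by
    funext j
    simp only [p', criticalWeights, sub_eq_add_neg]
  change ((∀ j, 0 < p j) → _ → fderiv ℝ (softmaxLinearObjective C i lam) (offsetLogit C p) = 0) ∧
    ((∀ j, 0 < p' j) → _ → fderiv ℝ (softmaxLinearObjective C i lam) (offsetLogit C p') = 0) ∧
    ∀ y, fderiv ℝ (softmaxLinearObjective C i lam) y = 0 →
      y = offsetLogit C p ∨ y = offsetLogit C p'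
  rw [hp']
  exact ⟨fderiv_softmaxLinearObjective_offsetLogit_criticalWeights hC hs,
    fderiv_softmaxLinearObjective_offsetLogit_criticalWeights hC (by rwa [neg_sq]),
    fun y => eq_offsetLogit_criticalWeights_of_fderiv_eq_zero hC⟩

/-- Characterization of stationary points of the softmax-plus-linear objective for
`C > 0` (part of Proposition thm:softmax_exact_a): with `lam i ∈ [-1/4, 0]` and
`lam j ≥ 0` for `j ≠ i`, the candidate points built from `p` and `p'` are stationary
whenever their defining conditions (positivity and sum `< 1`) hold, and every
stationary point of `f` is one of these two points (so there are at most two). -/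
theorem softmax_linear_stationary_points_pos_C
    (n : ℕ) (C : ℝ) (hC : 0 < C) (i : Fin n) (lam : Fin n → ℝ)
    (hli : lam i ∈ Set.Icc (-(1 / 4) : ℝ) 0)
    (hlj : ∀ j, j ≠ i → 0 ≤ lam j) :
    let s : ℝ := Real.sqrt (1 + 4 * lam i)
    let f : (Fin n → ℝ) → ℝ := fun x =>
      Real.exp (x i) / ((∑ j, Real.exp (x j)) + C) + ∑ j, lam j * x j
    let p : Fin n → ℝ := fun j => if j = i then (1 + s) / 2 else 2 * lam j / (1 + s)
    let p' : Fin n → ℝ := fun j => if j = i then (1 - s) / 2 else 2 * lam j / (1 - s)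
    let xP : Fin n → ℝ := fun j => Real.log (p j) + Real.log (C / (1 - ∑ k, p k))
    let xP' : Fin n → ℝ := fun j => Real.log (p' j) + Real.log (C / (1 - ∑ k, p' k))
    ((∀ j, 0 < p j) → (∑ k, p k) < 1 → fderiv ℝ f xP = 0) ∧
    ((∀ j, 0 < p' j) → (∑ k, p' k) < 1 → fderiv ℝ f xP' = 0) ∧
    (∀ y : Fin n → ℝ, fderiv ℝ f y = 0 → y = xP ∨ y = xP') :=
  softmax_linear_stationary_points_pos_C_general n C hC i lam hli
end

section
/- Stationary points of the inverse-sum-of-exponentials objective (Proposition in Appendix, thm:softmax_exact_b): For C, D > 0 and lambda in R^n, define f : R^n -> R by f(x) = D / (sum_{j=1}^n exp(x_j) + C) + sum_{j=1}^n lambda_j x_j. Then f has a stationary point (a point where the gradient of f vanishes) if and only if lambda_j > 0 for all j and sum_j lambda_j <= D / (4C). When these conditions hold, the stationary points of f are exactly the points x^+ and x^- given by x^{±}_j = log(lambda_j / D) + 2 log(t^{±}), where t^{±} = (1 ± sqrt(1 - (4C/D) sum_j lambda_j)) / ((2/D) sum_j lambda_j). -/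
/-!
At a stationary point `x`, with `T = ∑ k, exp (x k) + C`, the gradient equations read
`lam j = D * exp (x j) / T ^ 2`. Summing them shows that `T` is a root of the quadratic
`(∑ lam) t ^ 2 - D t + D C`, and conversely every root `t` (necessarily positive) gives the
stationary point `x j = log (lam j / D) + 2 log t`. So stationary points correspond to roots of
this quadratic: they exist iff its discriminant `D ^ 2 - 4 D C ∑ lam` is nonnegative, and the
roots are `t±`.
-/

open Real Finset

section

variable {ι : Type*} [Fintype ι]

noncomputable def invSumExp (C D : ℝ) (lam x : ι → ℝ) : ℝ :=
  D / (∑ j, exp (x j) + C) + ∑ j, lam j * x j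

theorem sum_smul_proj_eq_zero_iff (g : ι → ℝ) :
    (∑ j, g j • ContinuousLinearMap.proj j : (ι → ℝ) →L[ℝ] ℝ) = 0 ↔ g = 0 := by
  classical
  refine ⟨fun h => funext fun j => ?_, fun h => by simp [h]⟩
  simpa [Pi.single_apply] using congr($h (Pi.single j 1))

theorem hasFDerivAt_invSumExp {C : ℝ} (D : ℝ) (lam : ι → ℝ) {x : ι → ℝ}
    (hT : ∑ j, exp (x j) + C ≠ 0) :
    HasFDerivAt (invSumExp C D lam)
      (∑ j, (lam j - D * exp (x j) / (∑ k, exp (x k) + C) ^ 2) •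
        (ContinuousLinearMap.proj j : (ι → ℝ) →L[ℝ] ℝ)) x := by
  have hS : HasFDerivAt (fun y : ι → ℝ => ∑ j, exp (y j) + C)
      (∑ j, exp (x j) • (ContinuousLinearMap.proj j : (ι → ℝ) →L[ℝ] ℝ)) x := by
    refine (HasFDerivAt.fun_sum fun j _ => ?_).add_const C
    exact (hasDerivAt_exp (x j)).comp_hasFDerivAt (f := fun y : ι → ℝ => y j) x
      (hasFDerivAt_apply j x)
  have hlin : HasFDerivAt (fun y : ι → ℝ => ∑ j, lam j * y j)
      (∑ j, lam j • (ContinuousLinearMap.proj j : (ι → ℝ) →L[ℝ] ℝ)) x :=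
    HasFDerivAt.fun_sum fun j _ => (hasFDerivAt_apply j x).const_mul (lam j)
  have hinv := ((hasDerivAt_inv hT).const_mul D).comp_hasFDerivAt x hS
  refine ((hinv.add hlin).congr_fderiv ?_).congr_of_eventuallyEq
    (.of_forall fun y => by simp [invSumExp, div_eq_mul_inv])
  ext v
  simp only [mul_neg, neg_smul, add_apply, neg_apply, smul_apply, _root_.sum_apply,
    ContinuousLinearMap.proj_apply, smul_eq_mul, mul_sum, ← sum_neg_distrib, ← sum_add_distrib]
  refine sum_congr rfl fun j _ => ?_
  ring

theorem fderiv_invSumExp_eq_zero_iff {C : ℝ} (hC : 0 < C) (D : ℝ) (lam x : ι → ℝ) :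
    fderiv ℝ (invSumExp C D lam) x = 0 ↔
      ∀ j, lam j = D * exp (x j) / (∑ k, exp (x k) + C) ^ 2 := by
  have hT : ∑ k, exp (x k) + C ≠ 0 := by positivity
  simp only [(hasFDerivAt_invSumExp D lam hT).fderiv, sum_smul_proj_eq_zero_iff, funext_iff,
    Pi.zero_apply, sub_eq_zero]

theorem exp_log_div_add_two_mul_log {a D t : ℝ} (ha : 0 < a) (hD : 0 < D) (ht : 0 < t) :
    exp (log (a / D) + 2 * log t) = a / D * t ^ 2 := by
  rw [exp_add, exp_log (div_pos ha hD), two_mul, exp_add, exp_log ht, sq]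

theorem eq_mul_exp_div_sq_iff {a D t y : ℝ} (ha : 0 < a) (hD : 0 < D) (ht : 0 < t) :
    a = D * exp y / t ^ 2 ↔ y = log (a / D) + 2 * log t := by
  constructor
  · intro h
    apply exp_injective
    rw [exp_log_div_add_two_mul_log ha hD ht, h]
    field_simp
  · rintro rfl
    rw [exp_log_div_add_two_mul_log ha hD ht]
    field_simp

theorem pos_of_quadratic_eq_zero {L C D t : ℝ} (hL : 0 ≤ L) (hC : 0 < C) (hD : 0 < D)
    (h : L * t ^ 2 - D * t + D * C = 0) : 0 < t := by
  by_contra! ht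
  nlinarith [mul_nonneg hL (sq_nonneg t), mul_pos hD hC, mul_nonneg hD.le (neg_nonneg.2 ht)]

theorem le_div_of_quadratic_eq_zero {L C D t : ℝ} (hC : 0 < C) (hD : 0 < D)
    (h : L * t ^ 2 - D * t + D * C = 0) : L ≤ D / (4 * C) := by
  rw [le_div_iff₀ (by positivity)]
  have hsq : (2 * L * t - D) ^ 2 = D * (D - 4 * L * C) := by linear_combination 4 * L * h
  nlinarith [sq_nonneg (2 * L * t - D)]

theorem quadratic_eq_zero_iff_of_le {L C D t : ℝ} (hL : 0 < L) (hC : 0 < C) (hD : 0 < D)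
    (hle : L ≤ D / (4 * C)) :
    L * t ^ 2 - D * t + D * C = 0 ↔
      t = (1 + √(1 - 4 * C / D * L)) / (2 / D * L) ∨
      t = (1 - √(1 - 4 * C / D * L)) / (2 / D * L) := by
  set s := √(1 - 4 * C / D * L)
  have hs : s ^ 2 = 1 - 4 * C / D * L := by
    refine sq_sqrt ?_
    rw [sub_nonneg, div_mul_eq_mul_div, div_le_one hD]
    linarith [(le_div_iff₀ (by positivity)).1 hle]
  have hdisc : discrim L (-D) (D * C) = (D * s) * (D * s) := by
    rw [discrim]
    field_simp at hs
    linear_combination (-D) * hs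
  have hplus : (- -D + D * s) / (2 * L) = (1 + s) / (2 / D * L) := by field_simp
  have hminus : (- -D - D * s) / (2 * L) = (1 - s) / (2 / D * L) := by field_simp
  rw [← hplus, ← hminus, ← quadratic_eq_zero_iff hL.ne' hdisc t]
  constructor <;> intro h <;> linear_combination h

theorem fderiv_invSumExp_eq_zero_iff_exists_root {C D : ℝ} (hC : 0 < C) (hD : 0 < D)
    (lam x : ι → ℝ) :
    fderiv ℝ (invSumExp C D lam) x = 0 ↔
      (∀ j, 0 < lam j) ∧ ∃ t, (∑ j, lam j) * t ^ 2 - D * t + D * C = 0 ∧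
        x = fun j => log (lam j / D) + 2 * log t := by
  rw [fderiv_invSumExp_eq_zero_iff hC]
  constructor
  · intro h
    set T := ∑ k, exp (x k) + C
    have hT : 0 < T := by positivity
    have hlam : ∀ j, 0 < lam j := fun j => (h j).symm ▸ by positivity
    refine ⟨hlam, T, ?_, funext fun j => (eq_mul_exp_div_sq_iff (hlam j) hD hT).1 (h j)⟩
    have hsum : (∑ j, lam j) * T ^ 2 = D * (T - C) := by
      rw [sum_congr rfl fun j _ => h j, ← sum_div, ← mul_sum]
      field_simp
      ring
    linear_combination hsum
  · rintro ⟨hlam, t, hq, rfl⟩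
    have ht := pos_of_quadratic_eq_zero (sum_nonneg fun j _ => (hlam j).le) hC hD hq
    have hT : ∑ k, exp (log (lam k / D) + 2 * log t) + C = t := by
      simp only [exp_log_div_add_two_mul_log (hlam _) hD ht, ← sum_mul, ← sum_div]
      field_simp
      linear_combination hq
    intro j
    rw [hT]
    exact (eq_mul_exp_div_sq_iff (hlam j) hD ht).2 rfl

end

/-- Stationary points of the inverse-sum-of-exponentials objective
(Proposition thm:softmax_exact_b): for `C, D > 0`,
`f x = D / (∑ j exp (x j) + C) + ∑ j lam j * x j` has a stationary point if and only
if all `lam j > 0` and `∑ j lam j ≤ D / (4C)`; and in that case the stationary points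
are exactly the two points `x±` with `x±_j = log (lam j / D) + 2 log t±`, where
`t± = (1 ± √(1 - (4C/D) ∑ lam)) / ((2/D) ∑ lam)`. -/
theorem inv_sum_exp_stationary_points
    (n : ℕ) (C D : ℝ) (hC : 0 < C) (hD : 0 < D) (lam : Fin n → ℝ) :
    let f : (Fin n → ℝ) → ℝ := fun x =>
      D / ((∑ j, Real.exp (x j)) + C) + ∑ j, lam j * x j
    let tPlus : ℝ :=
      (1 + Real.sqrt (1 - (4 * C / D) * ∑ j, lam j)) / ((2 / D) * ∑ j, lam j)
    let tMinus : ℝ :=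
      (1 - Real.sqrt (1 - (4 * C / D) * ∑ j, lam j)) / ((2 / D) * ∑ j, lam j)
    let xPlus : Fin n → ℝ := fun j => Real.log (lam j / D) + 2 * Real.log tPlus
    let xMinus : Fin n → ℝ := fun j => Real.log (lam j / D) + 2 * Real.log tMinus
    ((∃ x : Fin n → ℝ, fderiv ℝ f x = 0) ↔
      ((∀ j, 0 < lam j) ∧ (∑ j, lam j) ≤ D / (4 * C))) ∧
    (((∀ j, 0 < lam j) ∧ (∑ j, lam j) ≤ D / (4 * C)) →
      ∀ y : Fin n → ℝ, (fderiv ℝ f y = 0 ↔ (y = xPlus ∨ y = xMinus))) := by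
  intro f tPlus tMinus xPlus xMinus
  have hstat (y : Fin n → ℝ) : fderiv ℝ f y = 0 ↔ (∀ j, 0 < lam j) ∧
      ∃ t, (∑ j, lam j) * t ^ 2 - D * t + D * C = 0 ∧
        y = fun j => log (lam j / D) + 2 * log t :=
    fderiv_invSumExp_eq_zero_iff_exists_root hC hD lam y
  have hpoints : (∀ j, 0 < lam j) ∧ (∑ j, lam j) ≤ D / (4 * C) →
      ∀ y, fderiv ℝ f y = 0 ↔ y = xPlus ∨ y = xMinus := by
    rintro ⟨hlam, hle⟩ y
    rw [hstat, and_iff_right hlam]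
    rcases isEmpty_or_nonempty (Fin n) with hn | hn
    · -- no coordinates: `t = C` is the root, and `t±` are junk divisions by `∑ lam = 0`
      simp only [Subsingleton.elim y xPlus, true_or, iff_true]
      exact ⟨C, by simp, Subsingleton.elim _ _⟩
    · have hL : 0 < ∑ j, lam j := sum_pos (fun j _ => hlam j) univ_nonempty
      simp only [quadratic_eq_zero_iff_of_le hL hC hD hle, or_and_right, exists_or,
        exists_eq_left]
      rfl
  refine ⟨⟨?_, fun h => ⟨xPlus, (hpoints h xPlus).2 (Or.inl rfl)⟩⟩, hpoints⟩
  rintro ⟨x, hx⟩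
  obtain ⟨hlam, t, hq, -⟩ := (hstat x).1 hx
  exact ⟨hlam, le_div_of_quadratic_eq_zero hC hD hq⟩
end
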